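/- arXiv:0707.1845 — 3 statements merged into one kernel-verified Lean document; each statement's English description precedes it below -/
import Mathlib

section
/- Let Ψ_1, ..., Ψ_N : ℝ^d → ℂ be functions with Re(Ψ_j(ξ)) ≥ 0 for all ξ. For each sign vector ε ∈ {+1,-1}^N with ε_1 = +1, define Ψ^ε_j(ξ) = Ψ_j(ξ) if ε_j = +1 and Ψ^ε_j(ξ) = conj(Ψ_j(ξ)) if ε_j = -1. Then the sum over all 2^{N-1} such sign vectors ε of Re(∏_{j=1}^N 1/(1+Ψ^ε_j(ξ))) equals 2^{N-1} ∏_{j=1}^N Re(1/(1+Ψ_j(ξ))), and in particular this quantity is strictly positive. -/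
open Complex Finset
open scoped ComplexConjugate

/-!
Write `z j = (1 + Ψ j ξ)⁻¹`, so that `(1 + conj (Ψ j ξ))⁻¹ = conj (z j)`. Summed over all sign
vectors, the products of `z j` or `conj (z j)` (as `ε j` says) factor as
`∏ j, (z j + conj (z j)) = 2 ^ N * ∏ j, Re (z j)`.
Flipping every sign conjugates the product and so keeps its real part, and it swaps the sign
vectors with `ε 0 = +1` and those with `ε 0 = -1`; hence the restricted sum is half of the full one.
Positivity follows from `Re (1 + w) > 0`.
-/

lemma re_inv_one_add_pos {w : ℂ} (hw : 0 ≤ w.re) : 0 < ((1 + w)⁻¹).re := by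
  have hre : 0 < (1 + w).re := by rw [add_re, one_re]; linarith
  rw [inv_re]
  exact div_pos hre (normSq_pos.mpr fun h => by simp [h] at hre)

lemma inv_one_add_ite_conj (b : Bool) (w : ℂ) :
    (1 + if b then w else conj w)⁻¹ = if b then (1 + w)⁻¹ else conj (1 + w)⁻¹ := by
  cases b <;> simp

section SignVectors

variable {ι : Type*} [Fintype ι]

lemma prod_ite_conj_not (z : ι → ℂ) (ε : ι → Bool) :
    ∏ j, (if !ε j then z j else conj (z j)) = conj (∏ j, if ε j then z j else conj (z j)) := by
  rw [map_prod]
  refine prod_congr rfl fun j _ => ?_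
  cases ε j <;> simp

variable [DecidableEq ι]

lemma two_nsmul_sum_filter_apply_eq_true {M : Type*} [AddCommMonoid M] (g : (ι → Bool) → M)
    (hg : ∀ ε, g (fun j => !ε j) = g ε) (i : ι) :
    2 • ∑ ε with ε i = true, g ε = ∑ ε, g ε := by
  have hflip : ∑ ε with ¬ε i = true, g ε = ∑ ε with ε i = true, g ε :=
    sum_equiv (Function.Involutive.toPerm (fun ε j => !ε j) fun ε => by simp)
      (fun ε => by simp [Function.Involutive.toPerm]) (fun ε _ => (hg ε).symm)
  rw [← sum_filter_add_sum_filter_not univ (fun ε => ε i = true), hflip, two_nsmul]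

lemma sum_prod_ite_conj (z : ι → ℂ) :
    ∑ ε : ι → Bool, ∏ j, (if ε j then z j else conj (z j))
      = ((2 ^ Fintype.card ι * ∏ j, (z j).re : ℝ) : ℂ) := by
  refine (Fintype.prod_sum fun j (b : Bool) => if b then z j else conj (z j)).symm.trans ?_
  have hpair (j : ι) : ∑ b : Bool, (if b then z j else conj (z j)) = 2 * ((z j).re : ℂ) := by
    rw [Fintype.sum_bool, if_pos rfl, if_neg Bool.false_ne_true, add_conj, ofReal_mul, ofReal_ofNat]
  rw [prod_congr rfl fun j _ => hpair j, prod_mul_distrib, prod_const, card_univ]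
  push_cast; rfl

lemma sum_filter_re_prod_ite_conj (z : ι → ℂ) (i : ι) :
    ∑ ε : ι → Bool with ε i = true, (∏ j, if ε j then z j else conj (z j)).re
      = 2 ^ (Fintype.card ι - 1) * ∏ j, (z j).re := by
  have hsymm (ε : ι → Bool) : (∏ j, if !ε j then z j else conj (z j)).re
      = (∏ j, if ε j then z j else conj (z j)).re := by
    rw [prod_ite_conj_not, conj_re]
  have hfull : ∑ ε : ι → Bool, (∏ j, if ε j then z j else conj (z j)).re
      = 2 ^ Fintype.card ι * ∏ j, (z j).re := by
    rw [← re_sum, sum_prod_ite_conj, ofReal_re]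
  have hcard : Fintype.card ι ≠ 0 := (Fintype.card_pos_iff.mpr ⟨i⟩).ne'
  apply mul_left_cancel₀ (two_ne_zero (α := ℝ))
  rw [← mul_assoc, mul_pow_sub_one hcard, ← hfull, ← two_nsmul_sum_filter_apply_eq_true
    (fun ε => (∏ j, if ε j then z j else conj (z j)).re) hsymm i, two_nsmul, two_mul]

end SignVectors

/-- For Lévy exponents `Ψ 1, ..., Ψ N : ℝ^d → ℂ` (nonnegative real parts), the sum over
all `2^(N-1)` sign vectors `ε` with `ε 1 = +1` of `Re (∏ j, 1/(1 + Ψ^ε j ξ))` equals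
`2^(N-1) * ∏ j, Re (1/(1 + Ψ j ξ))`, which is strictly positive.  Here `Ψ^ε j = Ψ j`
if `ε j = +1` and `Ψ^ε j = conj (Ψ j)` if `ε j = -1`. -/
theorem stmt3 (N d : ℕ) (hN : 0 < N) (Ψ : Fin N → (Fin d → ℝ) → ℂ)
    (hΨ : ∀ j ξ, 0 ≤ (Ψ j ξ).re) (ξ : Fin d → ℝ) :
    (∑ ε ∈ Finset.univ.filter (fun ε : Fin N → Bool => ε ⟨0, hN⟩ = true),
        (∏ j, (1 + (if ε j then Ψ j ξ else (starRingEnd ℂ) (Ψ j ξ)))⁻¹).re)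
      = 2 ^ (N - 1) * ∏ j, ((1 + Ψ j ξ)⁻¹).re ∧
    0 < ∑ ε ∈ Finset.univ.filter (fun ε : Fin N → Bool => ε ⟨0, hN⟩ = true),
        (∏ j, (1 + (if ε j then Ψ j ξ else (starRingEnd ℂ) (Ψ j ξ)))⁻¹).re := by
  simp_rw [inv_one_add_ite_conj]
  rw [sum_filter_re_prod_ite_conj (fun j => (1 + Ψ j ξ)⁻¹), Fintype.card_fin]
  exact ⟨rfl, mul_pos (by positivity) (prod_pos fun j _ => re_inv_one_add_pos (hΨ j ξ))⟩
end

section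
/- Let X_t, t ∈ ℝ_+^N, be an N-parameter additive Lévy process in ℝ^d with Lévy exponent (Ψ_1, ..., Ψ_N), meaning X_t = X^1_{t_1} + ⋯ + X^N_{t_N} with X^j independent Lévy processes, E[e^{iξ·X^j_{t_j}}] = e^{-t_j Ψ_j(ξ)}. Define the 1-killing occupation measure O(A) = ∫_{ℝ_+^N} 1(X_t ∈ A) e^{-∑_{j=1}^N t_j} dt. Then O is a random probability measure and E[|Ô(ξ)|^2] = ∏_{j=1}^N Re(1/(1+Ψ_j(ξ))), where Ô(ξ) = ∫ e^{iξ·x} O(dx). -/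
/-!
The killing density `e^{-∑ t_j} dt` on `ℝ₊^N` is the law of `N` independent standard exponential
times, so `O` is the image of a probability measure. Expanding `|Ô ξ|²` as a double integral over
`(s, t)` and exchanging it with the expectation turns `E |Ô ξ|²` into the integral of the increment
characteristic function, which factorises over the coordinates. In each coordinate the integral
over `{s < t}` equals `1 / (2 (1 + Ψ_j ξ))`, the one over `{t ≤ s}` equals
`1 / (2 (1 + Ψ_j (-ξ)))`, and `Ψ_j (-ξ)` is the complex conjugate of `Ψ_j ξ`, so their sum is
`Re (1 / (1 + Ψ_j ξ))`.
-/

open MeasureTheory Complex ComplexConjugate Set ProbabilityTheory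

theorem MeasureTheory.Measure.pi_withDensity_ofReal {ι : Type*} [Fintype ι] {α : ι → Type*}
    [∀ i, MeasurableSpace (α i)] (μ : ∀ i, Measure (α i)) [∀ i, SigmaFinite (μ i)]
    (g : ∀ i, α i → ℝ) (hg : ∀ i, Integrable (g i) (μ i)) (hg0 : ∀ i x, 0 ≤ g i x) :
    Measure.pi (fun i => (μ i).withDensity fun x => ENNReal.ofReal (g i x)) =
      (Measure.pi μ).withDensity fun x => ENNReal.ofReal (∏ i, g i (x i)) := by
  have (i : ι) : IsFiniteMeasure ((μ i).withDensity fun x => ENNReal.ofReal (g i x)) :=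
    isFiniteMeasure_withDensity_ofReal (hg i).hasFiniteIntegral
  refine Measure.pi_eq (μ := fun i => (μ i).withDensity fun x => ENNReal.ofReal (g i x))
    fun s hs => ?_
  rw [withDensity_apply _ (MeasurableSet.univ_pi hs), Measure.restrict_pi_pi,
    ← ofReal_integral_eq_lintegral_ofReal, integral_fintype_prod_eq_prod,
    ENNReal.ofReal_prod_of_nonneg]
  · refine Finset.prod_congr rfl fun i _ => ?_
    rw [withDensity_apply _ (hs i),
      ofReal_integral_eq_lintegral_ofReal (hg i).restrict (ae_of_all _ (hg0 i))]
  · exact fun i _ => integral_nonneg (hg0 i)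
  · exact Integrable.fintype_prod_dep fun i => (hg i).restrict
  · exact ae_of_all _ fun x => Finset.prod_nonneg fun i _ => hg0 i (x i)

theorem integral_prod_pi_prod_eq_prod {ι 𝕜 α : Type*} [Fintype ι] [RCLike 𝕜]
    [MeasurableSpace α] (ν : ι → Measure α) [∀ i, SigmaFinite (ν i)] (k : ι → α × α → 𝕜) :
    ∫ p, ∏ i, k i (p.1 i, p.2 i) ∂(Measure.pi ν).prod (Measure.pi ν) =
      ∏ i, ∫ z, k i z ∂(ν i).prod (ν i) := by
  rw [← (measurePreserving_arrowProdEquivProdArrow α α ι ν ν).integral_comp',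
    ← integral_fintype_prod_eq_prod]
  rfl

theorem conj_cexp_I_mul (a : ℝ) : conj (cexp (I * a)) = cexp (I * ↑(-a)) := by
  rw [← exp_conj, map_mul, conj_I, conj_ofReal]
  push_cast
  ring_nf

theorem conj_cexp_I_mul_mul_cexp_I_mul (a b : ℝ) :
    conj (cexp (I * a)) * cexp (I * b) = cexp (I * ↑(b - a)) := by
  rw [conj_cexp_I_mul, ← Complex.exp_add]
  push_cast
  ring_nf

theorem norm_cexp_I_mul (a : ℝ) : ‖cexp (I * a)‖ = 1 := by
  rw [mul_comm, norm_exp_ofReal_mul_I]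

theorem norm_cexp_neg_mul_le_one {r : ℝ} (hr : 0 ≤ r) {ψ : ℂ} (hψ : 0 ≤ ψ.re) :
    ‖cexp (-r * ψ)‖ ≤ 1 := by
  rw [norm_exp, Real.exp_le_one_iff]
  simpa using mul_nonneg hr hψ

theorem add_conj_inv_two_mul (z : ℂ) : (2 * z)⁻¹ + (2 * conj z)⁻¹ = ((z⁻¹).re : ℂ) := by
  have hconj : (2 * conj z)⁻¹ = conj (2 * z)⁻¹ := by simp [map_ofNat]
  rw [hconj, add_conj, mul_inv, show (2 : ℂ)⁻¹ = ((2⁻¹ : ℝ) : ℂ) by push_cast; rfl,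
    re_ofReal_mul]
  push_cast
  ring

theorem eq_of_forall_pos_cexp_neg_mul_eq {a b : ℂ}
    (h : ∀ c : ℝ, 0 < c → cexp (-(c * a)) = cexp (-(c * b))) : a = b := by
  -- for this `c`, both `-(c * a)` and `-(c * b)` lie in the strip where `exp` is injective
  set c : ℝ := (1 + |a.im| + |b.im|)⁻¹
  have hc : 0 < c := by positivity
  have him {z : ℂ} (hz : |z.im| ≤ |a.im| + |b.im|) : |(-(c * z)).im| < Real.pi := by
    have : c * (|a.im| + |b.im|) < 1 := by
      rw [inv_mul_lt_one₀ (by positivity)]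
      linarith
    simp only [neg_im, im_ofReal_mul, abs_neg, abs_mul, abs_of_pos hc]
    nlinarith [Real.pi_gt_three]
  have ha := abs_lt.1 (him (le_add_of_nonneg_right (abs_nonneg b.im)))
  have hb := abs_lt.1 (him (le_add_of_nonneg_left (abs_nonneg a.im)))
  have := exp_inj_of_neg_pi_lt_of_le_pi ha.1 ha.2.le hb.1 hb.2.le (h c hc)
  exact mul_left_cancel₀ (ofReal_ne_zero.2 hc.ne') (neg_inj.1 this)

theorem integral_norm_integral_cexp_I_mul_sq {T Ω : Type*} [MeasurableSpace T]
    [MeasurableSpace Ω] (μ : Measure T) [IsFiniteMeasure μ] (P : Measure Ω) [IsFiniteMeasure P]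
    {φ : T → Ω → ℝ} (hφ : Measurable (Function.uncurry φ)) :
    ((∫ ω, ‖∫ t, cexp (I * φ t ω) ∂μ‖ ^ 2 ∂P : ℝ) : ℂ) =
      ∫ p, ∫ ω, cexp (I * ↑(φ p.2 ω - φ p.1 ω)) ∂P ∂μ.prod μ := by
  have hint : Integrable (Function.uncurry fun ω (p : T × T) => cexp (I * ↑(φ p.2 ω - φ p.1 ω)))
      (P.prod (μ.prod μ)) := by
    refine Integrable.of_bound (Measurable.aestronglyMeasurable ?_) 1
      (ae_of_all _ fun _ => (norm_cexp_I_mul _).le)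
    have h1 : Measurable fun q : Ω × (T × T) => φ q.2.1 q.1 :=
      hφ.comp (measurable_snd.fst.prodMk measurable_fst)
    have h2 : Measurable fun q : Ω × (T × T) => φ q.2.2 q.1 :=
      hφ.comp (measurable_snd.snd.prodMk measurable_fst)
    exact (measurable_const.mul (measurable_ofReal.comp (h2.sub h1))).cexp
  calc ((∫ ω, ‖∫ t, cexp (I * φ t ω) ∂μ‖ ^ 2 ∂P : ℝ) : ℂ)
      = ∫ ω, conj (∫ t, cexp (I * φ t ω) ∂μ) * ∫ t, cexp (I * φ t ω) ∂μ ∂P := by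
        rw [← integral_complex_ofReal]
        simp_rw [conj_mul']
        push_cast
        rfl
    _ = ∫ ω, ∫ p, cexp (I * ↑(φ p.2 ω - φ p.1 ω)) ∂μ.prod μ ∂P := by
        simp_rw [← integral_conj, ← integral_prod_mul, conj_cexp_I_mul_mul_cexp_I_mul]
    _ = ∫ p, ∫ ω, cexp (I * ↑(φ p.2 ω - φ p.1 ω)) ∂P ∂μ.prod μ := integral_integral_swap hint

instance : IsProbabilityMeasure (expMeasure 1) := isProbabilityMeasure_expMeasure one_pos

instance {r : ℝ} : NullSingletonClass (expMeasure r) :=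
  show NullSingletonClass (volume.withDensity _) from inferInstance

theorem integrable_exponentialPDFReal_one : Integrable (exponentialPDFReal 1) := by
  refine ⟨(measurable_exponentialPDFReal 1).aestronglyMeasurable, ?_⟩
  rw [hasFiniteIntegral_iff_ofReal (ae_of_all _ (exponentialPDFReal_nonneg one_pos))]
  have := lintegral_gammaPDF_eq_one one_pos one_pos
  simp only [gammaPDF] at this
  simp [exponentialPDFReal, this]

theorem ae_nonneg_expMeasure (r : ℝ) : ∀ᵐ x ∂expMeasure r, 0 ≤ x := by
  simp only [ae_iff, not_le]
  change (volume.withDensity (gammaPDF 1 r)) (Iio 0) = 0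
  rw [withDensity_apply _ measurableSet_Iio]
  exact lintegral_gammaPDF_of_nonpos le_rfl

theorem ae_nonneg_pi_expMeasure {ι : Type*} [Fintype ι] :
    ∀ᵐ t ∂Measure.pi (fun _ : ι => expMeasure 1), ∀ j, 0 ≤ t j :=
  ae_all_iff.2 fun j => (Measure.quasiMeasurePreserving_eval _ j).ae (ae_nonneg_expMeasure 1)

theorem integral_expMeasure_one {E : Type*} [NormedAddCommGroup E] [NormedSpace ℝ E]
    (f : ℝ → E) : ∫ x, f x ∂expMeasure 1 = ∫ x in Ici 0, Real.exp (-x) • f x := by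
  change ∫ x, f x ∂volume.withDensity (fun x => ENNReal.ofReal (gammaPDFReal 1 1 x)) = _
  rw [integral_withDensity_eq_integral_toReal_smul
    (measurable_gammaPDFReal 1 1).ennreal_ofReal (ae_of_all _ fun _ => ENNReal.ofReal_lt_top),
    ← integral_indicator measurableSet_Ici]
  congr 1
  funext x
  by_cases hx : 0 ≤ x <;> simp [gammaPDFReal, hx, (Real.exp_pos _).le]

theorem integral_cexp_neg_expMeasure_one : ∫ σ, cexp (-σ) ∂expMeasure 1 = 2⁻¹ := by
  rw [integral_expMeasure_one, integral_Ici_eq_integral_Ioi]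
  calc ∫ x in Ioi 0, Real.exp (-x) • cexp (-x) = ∫ x in Ioi (0 : ℝ), cexp (-2 * x) := by
        refine setIntegral_congr_fun measurableSet_Ioi fun x _ => ?_
        rw [real_smul, ofReal_exp, ← Complex.exp_add]
        push_cast
        ring_nf
    _ = 2⁻¹ := by
        rw [integral_exp_mul_complex_Ioi (by simp)]
        simp

theorem integral_expMeasure_one_indicator_Ioi {ψ : ℂ} (hψ : 0 ≤ ψ.re) {σ : ℝ} (hσ : 0 ≤ σ) :
    ∫ τ, (Ioi σ).indicator (fun τ => cexp (-↑(τ - σ) * ψ)) τ ∂expMeasure 1 =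
      cexp (-σ) / (1 + ψ) := by
  have hre : 0 < (1 + ψ).re := by rw [add_re, one_re]; linarith
  rw [integral_expMeasure_one, ← Set.indicator_smul (Ioi σ) fun τ => Real.exp (-τ),
    setIntegral_indicator measurableSet_Ioi, Set.inter_eq_right.2 (Ioi_subset_Ici hσ)]
  calc ∫ τ in Ioi σ, Real.exp (-τ) • cexp (-↑(τ - σ) * ψ)
      = ∫ τ in Ioi σ, cexp (σ * ψ) * cexp (-(1 + ψ) * τ) := by
        refine setIntegral_congr_fun measurableSet_Ioi fun τ _ => ?_
        rw [real_smul, ofReal_exp, ← Complex.exp_add, ← Complex.exp_add]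
        push_cast
        ring_nf
    _ = cexp (-σ) / (1 + ψ) := by
        rw [integral_const_mul, integral_exp_mul_complex_Ioi (by rw [neg_re]; linarith), neg_div_neg_eq,
          mul_div_assoc', ← Complex.exp_add]
        ring_nf

theorem integral_expMeasure_one_indicator_Ici {ψ : ℂ} (hψ : 0 ≤ ψ.re) {σ : ℝ} (hσ : 0 ≤ σ) :
    ∫ τ, (Ici σ).indicator (fun τ => cexp (-↑(τ - σ) * ψ)) τ ∂expMeasure 1 =
      cexp (-σ) / (1 + ψ) := by
  rw [← integral_expMeasure_one_indicator_Ioi hψ hσ]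
  exact integral_congr_ae (indicator_ae_eq_of_ae_eq_set Ioi_ae_eq_Ici.symm)

theorem integral_expMeasure_one_prod_cexp_neg_abs_mul {ψ ψ' : ℂ} (hψ : 0 ≤ ψ.re)
    (hψ' : 0 ≤ ψ'.re) :
    ∫ p, cexp (-↑|p.2 - p.1| * (if p.1 < p.2 then ψ else ψ')) ∂(expMeasure 1).prod (expMeasure 1)
      = (2 * (1 + ψ))⁻¹ + (2 * (1 + ψ'))⁻¹ := by
  have houter (ψ : ℂ) (g : ℝ → ℝ → ℂ)
      (hg : ∀ σ, 0 ≤ σ → ∫ τ, g σ τ ∂expMeasure 1 = cexp (-σ) / (1 + ψ)) :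
      ∫ σ, ∫ τ, g σ τ ∂expMeasure 1 ∂expMeasure 1 = (2 * (1 + ψ))⁻¹ := by
    rw [integral_congr_ae ((ae_nonneg_expMeasure 1).mono hg), integral_div,
      integral_cexp_neg_expMeasure_one, mul_inv, div_eq_mul_inv]
  -- `A` lives above the diagonal and `B` on and below it; the inner integral of `B` is taken
  -- in the first coordinate, which makes it the same computation as for `A`
  set A : ℝ × ℝ → ℂ := fun p => (Ioi p.1).indicator (fun τ => cexp (-↑(τ - p.1) * ψ)) p.2
  set B : ℝ × ℝ → ℂ := fun p => (Ici p.2).indicator (fun σ => cexp (-↑(σ - p.2) * ψ')) p.1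
  have hsplit (p : ℝ × ℝ) :
      cexp (-↑|p.2 - p.1| * (if p.1 < p.2 then ψ else ψ')) = A p + B p := by
    by_cases h : p.1 < p.2
    · simp [A, B, h, abs_of_pos (sub_pos.2 h), not_le.2 h]
    · simp [A, B, h, abs_of_nonpos (sub_nonpos.2 (not_lt.1 h)), not_lt.1 h]
  have hA : Integrable A ((expMeasure 1).prod (expMeasure 1)) := by
    refine Integrable.of_bound ?_ 1 (ae_of_all _ fun p => ?_)
    · simp only [A, Set.indicator_apply, mem_Ioi]
      exact (Measurable.ite (measurableSet_lt measurable_fst measurable_snd) (by fun_prop)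
        measurable_const).aestronglyMeasurable
    · simp only [A, Set.indicator_apply, mem_Ioi]
      split_ifs with h
      · exact norm_cexp_neg_mul_le_one (sub_nonneg.2 h.le) hψ
      · simp
  have hB : Integrable B ((expMeasure 1).prod (expMeasure 1)) := by
    refine Integrable.of_bound ?_ 1 (ae_of_all _ fun p => ?_)
    · simp only [B, Set.indicator_apply, mem_Ici]
      exact (Measurable.ite (measurableSet_le measurable_snd measurable_fst) (by fun_prop)
        measurable_const).aestronglyMeasurable
    · simp only [B, Set.indicator_apply, mem_Ici]
      split_ifs with h
      · exact norm_cexp_neg_mul_le_one (sub_nonneg.2 h) hψ'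
      · simp
  rw [integral_congr_ae (ae_of_all _ hsplit), integral_add hA hB, integral_prod _ hA,
    integral_prod_symm _ hB]
  exact congrArg₂ (· + ·)
    (houter ψ _ fun σ hσ => integral_expMeasure_one_indicator_Ioi hψ hσ)
    (houter ψ' _ fun τ hτ => integral_expMeasure_one_indicator_Ici hψ' hτ)

theorem withDensity_exp_neg_sum_eq_pi_expMeasure {ι : Type*} [Fintype ι] :
    ((volume : Measure (ι → ℝ)).restrict {t | ∀ j, 0 ≤ t j}).withDensity
      (fun t => ENNReal.ofReal (Real.exp (-∑ j, t j))) = Measure.pi fun _ => expMeasure 1 := by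
  have hS : MeasurableSet {t : ι → ℝ | ∀ j, 0 ≤ t j} := by
    simpa [Set.pi] using MeasurableSet.univ_pi fun _ : ι => measurableSet_Ici (a := (0 : ℝ))
  change _ = Measure.pi fun _ =>
    (volume : Measure ℝ).withDensity fun x => ENNReal.ofReal (exponentialPDFReal 1 x)
  rw [Measure.pi_withDensity_ofReal _ _ (fun _ => integrable_exponentialPDFReal_one)
    (fun _ => exponentialPDFReal_nonneg one_pos), ← volume_pi, ← withDensity_indicator hS]
  congr 1
  funext t
  by_cases ht : ∀ j, 0 ≤ t j
  · simp [ht, exponentialPDFReal, gammaPDFReal, Real.exp_sum, ← Finset.sum_neg_distrib]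
  · obtain ⟨j, hj⟩ := not_forall.1 ht
    rw [Set.indicator_of_notMem (s := {t : ι → ℝ | ∀ j, 0 ≤ t j}) ht,
      Finset.prod_eq_zero (Finset.mem_univ j)]
    · simp
    · simp [exponentialPDFReal, gammaPDFReal, hj]

def HasIncrementCharFun {ι κ Ω : Type*} [Fintype ι] [Fintype κ] [MeasurableSpace Ω]
    (P : Measure Ω) (X : (ι → ℝ) → Ω → κ → ℝ) (Ψ : ι → (κ → ℝ) → ℂ) : Prop :=
  ∀ (ξ : κ → ℝ) (s t : ι → ℝ), (∀ j, 0 ≤ s j) → (∀ j, 0 ≤ t j) →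
    ∫ ω, cexp (I * ↑(∑ i, ξ i * (X t ω i - X s ω i))) ∂P =
      ∏ j, cexp (-↑|t j - s j| * Ψ j (if s j < t j then ξ else -ξ))

namespace HasIncrementCharFun

variable {ι κ Ω : Type*} [Fintype ι] [DecidableEq ι] [Fintype κ] [MeasurableSpace Ω]
  {P : Measure Ω} {X : (ι → ℝ) → Ω → κ → ℝ} {Ψ : ι → (κ → ℝ) → ℂ}

theorem apply_neg (hchar : HasIncrementCharFun P X Ψ) (j : ι) (ξ : κ → ℝ) :
    Ψ j (-ξ) = conj (Ψ j ξ) := by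
  -- the increments over `[0, c • e_j]` taken in the two directions are complex conjugate
  refine eq_of_forall_pos_cexp_neg_mul_eq fun c hc => ?_
  have hs (j' : ι) : 0 ≤ (Pi.single j c : ι → ℝ) j' :=
    (Pi.single_nonneg.2 hc.le : (0 : ι → ℝ) ≤ Pi.single j c) j'
  have h0 (j' : ι) : 0 ≤ (0 : ι → ℝ) j' := le_rfl
  have hprod (ψ : ι → ℂ) :
      ∏ j', cexp (-↑|(Pi.single j c : ι → ℝ) j'| * ψ j') = cexp (-(c * ψ j)) := by
    rw [Finset.prod_eq_single j (fun b _ hb => by simp [Pi.single_eq_of_ne hb]) (by simp)]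
    simp [abs_of_pos hc]
  have h1 := hchar ξ 0 (Pi.single j c) h0 hs
  have h2 := hchar ξ (Pi.single j c) 0 hs h0
  simp only [Pi.zero_apply, sub_zero, zero_sub, abs_neg, hprod, Pi.single_eq_same, hc,
    not_lt.2 hc.le, if_true, if_false] at h1 h2
  have hneg (ω : Ω) : ∑ i, ξ i * (X 0 ω i - X (Pi.single j c) ω i) =
      -∑ i, ξ i * (X (Pi.single j c) ω i - X 0 ω i) := by
    rw [← Finset.sum_neg_distrib]
    exact Finset.sum_congr rfl fun i _ => by ring
  calc cexp (-(c * Ψ j (-ξ))) = _ := h2.symm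
    _ = conj (∫ ω, cexp (I * ↑(∑ i, ξ i * (X (Pi.single j c) ω i - X 0 ω i))) ∂P) := by
        simp_rw [← integral_conj, conj_cexp_I_mul, hneg]
    _ = cexp (-(c * conj (Ψ j ξ))) := by
        rw [h1, ← exp_conj]
        simp

theorem integral_norm_integral_cexp_sq [IsFiniteMeasure P] (hchar : HasIncrementCharFun P X Ψ)
    (hX : Measurable (Function.uncurry X)) (hre : ∀ j ξ, 0 ≤ (Ψ j ξ).re) (ξ : κ → ℝ) :
    ∫ ω, ‖∫ t, cexp (I * ↑(∑ i, ξ i * X t ω i)) ∂Measure.pi fun _ : ι => expMeasure 1‖ ^ 2 ∂P =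
      ∏ j, ((1 + Ψ j ξ)⁻¹).re := by
  set μ := Measure.pi fun _ : ι => expMeasure 1
  have hφ : Measurable (Function.uncurry fun t ω => ∑ i, ξ i * X t ω i) :=
    Finset.measurable_sum _ fun i _ => ((measurable_pi_apply i).comp hX).const_mul (ξ i)
  have hsupp : ∀ᵐ p ∂μ.prod μ, (∀ j, 0 ≤ p.1 j) ∧ (∀ j, 0 ≤ p.2 j) :=
    (Measure.quasiMeasurePreserving_fst.ae ae_nonneg_pi_expMeasure).and
      (Measure.quasiMeasurePreserving_snd.ae ae_nonneg_pi_expMeasure)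
  rw [← ofReal_inj, integral_norm_integral_cexp_I_mul_sq μ P hφ, ofReal_prod]
  calc ∫ p, ∫ ω, cexp (I * ↑(∑ i, ξ i * X p.2 ω i - ∑ i, ξ i * X p.1 ω i)) ∂P ∂μ.prod μ
      = ∫ p, ∏ j, cexp (-↑|p.2 j - p.1 j| *
          (if p.1 j < p.2 j then Ψ j ξ else Ψ j (-ξ))) ∂μ.prod μ := by
        refine integral_congr_ae (hsupp.mono fun p hp => ?_)
        simp_rw [← Finset.sum_sub_distrib, ← mul_sub, ← apply_ite (Ψ _)]
        exact hchar ξ p.1 p.2 hp.1 hp.2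
    _ = ∏ j, ((2 * (1 + Ψ j ξ))⁻¹ + (2 * (1 + Ψ j (-ξ)))⁻¹) :=
        (integral_prod_pi_prod_eq_prod (fun _ => expMeasure 1) fun j (z : ℝ × ℝ) =>
          cexp (-↑|z.2 - z.1| * (if z.1 < z.2 then Ψ j ξ else Ψ j (-ξ)))).trans <|
        Finset.prod_congr rfl fun j _ =>
          integral_expMeasure_one_prod_cexp_neg_abs_mul (hre j ξ) (hre j (-ξ))
    _ = ∏ j, (((1 + Ψ j ξ)⁻¹).re : ℂ) := by
        refine Finset.prod_congr rfl fun j _ => ?_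
        rw [hchar.apply_neg, ← add_conj_inv_two_mul, map_add, map_one]

end HasIncrementCharFun

/-- Let `X t = X¹_{t 1} + ⋯ + X^N_{t N}` be an additive Lévy process in `ℝ^d` with Lévy
exponent `(Ψ 1, ..., Ψ N)`, encoded through its increment characteristic function:
`E e^{i ξ·(X t - X s)} = ∏ j e^{-|t j - s j| Ψ j (sgn (t j - s j) ξ)}` for `s, t ∈ ℝ₊^N`.
Let `O ω` be the 1-killing occupation measure, i.e. the image under `t ↦ X t ω` of the
measure `e^{-∑ j, t j} dt` on `ℝ₊^N`.  Then each `O ω` is a probability measure and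
`E |Ô ξ|² = ∏ j, Re (1/(1 + Ψ j ξ))` where `Ô ξ = ∫ e^{i ξ·x} O(dx)`. -/
theorem stmt7 (d N : ℕ) {Ω : Type*} [MeasurableSpace Ω] (P : Measure Ω)
    [IsProbabilityMeasure P]
    (X : (Fin N → ℝ) → Ω → (Fin d → ℝ)) (Ψ : Fin N → (Fin d → ℝ) → ℂ)
    (hX : Measurable (Function.uncurry X))
    (hre : ∀ j ξ, 0 ≤ (Ψ j ξ).re)
    (hchar : ∀ (ξ : Fin d → ℝ) (s t : Fin N → ℝ), (∀ j, 0 ≤ s j) → (∀ j, 0 ≤ t j) →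
      ∫ ω, Complex.exp (Complex.I * Complex.ofReal (∑ i, ξ i * (X t ω i - X s ω i))) ∂P
        = ∏ j, Complex.exp (-(Complex.ofReal |t j - s j|) *
            Ψ j (if s j < t j then ξ else -ξ))) :
    (∀ ω, IsProbabilityMeasure (Measure.map (fun t => X t ω)
        (((volume : Measure (Fin N → ℝ)).restrict {t | ∀ j, 0 ≤ t j}).withDensity
          (fun t => ENNReal.ofReal (Real.exp (-∑ j, t j)))))) ∧
    ∀ ξ : Fin d → ℝ,
      ∫ ω, ‖∫ x, Complex.exp (Complex.I * Complex.ofReal (∑ i, ξ i * x i))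
            ∂(Measure.map (fun t => X t ω)
              (((volume : Measure (Fin N → ℝ)).restrict {t | ∀ j, 0 ≤ t j}).withDensity
                (fun t => ENNReal.ofReal (Real.exp (-∑ j, t j)))))‖ ^ 2 ∂P
        = ∏ j, ((1 + Ψ j ξ)⁻¹).re := by
  rw [withDensity_exp_neg_sum_eq_pi_expMeasure]
  have hXω (ω : Ω) : Measurable fun t => X t ω := hX.comp measurable_prodMk_right
  refine ⟨fun ω => Measure.isProbabilityMeasure_map (hXω ω).aemeasurable, fun ξ => ?_⟩
  have hmap (ω : Ω) :
      ∫ x, cexp (I * ↑(∑ i, ξ i * x i)) ∂(Measure.pi fun _ => expMeasure 1).map (X · ω) =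
        ∫ t, cexp (I * ↑(∑ i, ξ i * X t ω i)) ∂Measure.pi fun _ => expMeasure 1 :=
    integral_map (hXω ω).aemeasurable (by fun_prop : Measurable _).aestronglyMeasurable
  simp_rw [hmap]
  exact HasIncrementCharFun.integral_norm_integral_cexp_sq hchar hX hre ξ
end

section
/- For complex z with Re(z) ≥ 0, ∫_0^∞ ∫_0^∞ e^{-s} e^{-t} e^{-|t-s| w(t,s)} ds dt = Re(1/(1+z)), where w(t,s) = z if t > s and w(t,s) = conj(z) if t < s. -/
/-!
Cut the quadrant along the diagonal, which is null. On `{s < t}` the integrand factors as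
`e^{(z-1)s} e^{-(1+z)t}`, and integrating first in `t`, then in `s`, gives `1/(2(1+z))`.
On `{t < s}` it is the same function with the roles of `s, t` exchanged and `z` replaced by
`conj z`; by Fubini (the integrand is dominated by `e^{-s-t}`) this part contributes
`1/(2(1+conj z))`, and the two halves add up to `Re (1/(1+z))`.
-/

open MeasureTheory Complex Set ComplexConjugate

noncomputable def upperTriangleKernel (w : ℂ) (s t : ℝ) : ℂ :=
  if s < t then cexp (-s - t - ((t - s : ℝ) : ℂ) * w) else 0

lemma norm_upperTriangleKernel_le {w : ℂ} (hw : 0 ≤ w.re) (s t : ℝ) :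
    ‖upperTriangleKernel w s t‖ ≤ Real.exp (-s) * Real.exp (-t) := by
  unfold upperTriangleKernel
  split_ifs with hst
  · rw [norm_exp, ← Real.exp_add]
    gcongr
    have : 0 ≤ (t - s) * w.re := mul_nonneg (by linarith) hw
    simp only [sub_re, neg_re, ofReal_re, re_ofReal_mul]
    linarith
  · rw [norm_zero]
    positivity

lemma integrable_upperTriangleKernel {w : ℂ} (hw : 0 ≤ w.re) :
    Integrable (Function.uncurry (upperTriangleKernel w))
      ((volume.restrict (Ioi 0)).prod (volume.restrict (Ioi 0))) := by
  have hexp : Integrable (fun x : ℝ ↦ Real.exp (-x)) (volume.restrict (Ioi 0)) :=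
    integrableOn_exp_neg_Ioi 0
  refine (hexp.mul_prod hexp).mono' ?_
    (.of_forall fun p ↦ norm_upperTriangleKernel_le hw p.1 p.2)
  exact (Measurable.ite (measurableSet_lt measurable_fst measurable_snd) (by fun_prop)
    measurable_const).aestronglyMeasurable

lemma integral_Ioi_upperTriangleKernel {w : ℂ} (hw : -1 < w.re) {s : ℝ} (hs : 0 ≤ s) :
    ∫ t in Ioi 0, upperTriangleKernel w s t = cexp (-2 * s) / (1 + w) := by
  have hw' : (-(1 + w)).re < 0 := by simp only [neg_re, add_re, one_re]; linarith
  have hK : upperTriangleKernel w s =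
      (Ioi s).indicator fun t ↦ cexp ((w - 1) * s) * cexp (-(1 + w) * t) := by
    ext t
    simp only [upperTriangleKernel, indicator, mem_Ioi, ← exp_add]
    split_ifs
    · push_cast
      ring_nf
    · rfl
  rw [hK, setIntegral_indicator measurableSet_Ioi, Ioi_inter_Ioi, max_eq_right hs,
    integral_const_mul, integral_exp_mul_complex_Ioi hw', neg_div_neg_eq, ← mul_div_assoc,
    ← exp_add]
  ring_nf

lemma integral_integral_upperTriangleKernel {w : ℂ} (hw : -1 < w.re) :
    ∫ s in Ioi 0, ∫ t in Ioi 0, upperTriangleKernel w s t = (2 * (1 + w))⁻¹ := by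
  have h2 : (-2 : ℂ).re < 0 := by norm_num
  rw [setIntegral_congr_fun measurableSet_Ioi
      fun s hs ↦ integral_Ioi_upperTriangleKernel hw (le_of_lt hs),
    integral_div, integral_exp_mul_complex_Ioi h2]
  simp only [ofReal_zero, mul_zero, exp_zero, neg_div_neg_eq, one_div, mul_inv_rev]
  ring

lemma exp_sub_abs_mul_ite_eq_add (z : ℂ) {s t : ℝ} (hst : s ≠ t) :
    cexp (-(s : ℂ) - t - (|t - s| : ℝ) * (if s < t then z else conj z)) =
      upperTriangleKernel z s t + upperTriangleKernel (conj z) t s := by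
  rcases hst.lt_or_gt with h | h
  · simp [upperTriangleKernel, h, h.not_gt, abs_of_pos (sub_pos.2 h)]
  · simp [upperTriangleKernel, h, h.not_gt, abs_of_neg (sub_neg.2 h)]
    ring_nf

lemma Complex.inv_two_mul_add_inv_two_mul_conj (w : ℂ) :
    (2 * w)⁻¹ + (2 * conj w)⁻¹ = (w⁻¹).re := by
  rw [mul_inv, mul_inv, ← map_inv₀, ← mul_add, add_conj]
  push_cast
  ring

/-- For complex `z` with `Re z ≥ 0`,
`∫_0^∞ ∫_0^∞ e^{-s} e^{-t} e^{-|t-s| w(t,s)} ds dt = Re (1/(1+z))`,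
where `w(t,s) = z` if `t > s` and `w(t,s) = conj z` if `t < s`. -/
theorem stmt8 (z : ℂ) (hz : 0 ≤ z.re) :
    (∫ s in Set.Ioi (0 : ℝ), ∫ t in Set.Ioi (0 : ℝ),
        Complex.exp (-(Complex.ofReal s) - Complex.ofReal t -
          (Complex.ofReal |t - s|) * (if s < t then z else (starRingEnd ℂ) z)))
      = Complex.ofReal (((1 + z)⁻¹).re) := by
  have hz' : 0 ≤ (conj z).re := by rwa [conj_re]
  have hK : Integrable (fun p : ℝ × ℝ ↦ upperTriangleKernel z p.1 p.2)
      ((volume.restrict (Ioi 0)).prod (volume.restrict (Ioi 0))) :=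
    integrable_upperTriangleKernel hz
  have hK' : Integrable (fun p : ℝ × ℝ ↦ upperTriangleKernel (conj z) p.2 p.1)
      ((volume.restrict (Ioi 0)).prod (volume.restrict (Ioi 0))) :=
    (integrable_upperTriangleKernel hz').swap
  calc _ = ∫ s in Ioi 0, ∫ t in Ioi 0,
          upperTriangleKernel z s t + upperTriangleKernel (conj z) t s := by
        refine integral_congr_ae (.of_forall fun s ↦ integral_congr_ae ?_)
        filter_upwards [Measure.ae_ne _ s] with t hts
        exact exp_sub_abs_mul_ite_eq_add z hts.symm
    _ = (∫ s in Ioi 0, ∫ t in Ioi 0, upperTriangleKernel z s t) +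
          ∫ t in Ioi 0, ∫ s in Ioi 0, upperTriangleKernel (conj z) t s := by
        rw [integral_integral (hK.add hK'), integral_add hK hK', integral_integral hK,
          integral_integral_swap (integrable_upperTriangleKernel hz')]
        exact congrArg _ (integral_integral (f := fun s t ↦ upperTriangleKernel _ t s) hK').symm
    _ = (2 * (1 + z))⁻¹ + (2 * (1 + conj z))⁻¹ := by
        rw [integral_integral_upperTriangleKernel (by linarith),
          integral_integral_upperTriangleKernel (by linarith)]
    _ = _ := by rw [← inv_two_mul_add_inv_two_mul_conj, map_add, map_one]
end
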